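/- Let W be a finite Coxeter group. Fix w ∈ W and for v ∈ W let v_w be the unique maximal-length element of {x : x ≤_R v and x ≤ w}. Then for every v ∈ W, v_w⁻¹v ≤_R w⁻¹w₀. -/

import Mathlib

/-!
Write `z = v_w⁻¹ v`. Every factorisation `w₀ = x y` is length-additive, so the claim amounts to
`ℓ(w z) = ℓ(w) + ℓ(z)`. This is proved by induction on `ℓ(z)`: if `s` is a left descent of `z`, then
`v_w s ≤_R v` is longer than `v_w`, hence `v_w s ≰ w`; the lifting property of the Bruhat order then
forces `w s > w` and shows that `v_w s` plays the role of `v_w` for the pair `(v, w s)`.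

The lifting property comes from the subword property, which rests on the strong exchange
condition. Strong exchange, and the length additivity at `w₀`, come from the reflection cocycle
`W →* (W → ZMod 2) ⋊ W`, whose value at `(w, t)` is the parity of the number of occurrences of `t`
in the left inversion sequence of any word for `w`.
-/

/-- The right weak Bruhat order: `u ≤_R v` iff `ℓ(u) + ℓ(u⁻¹v) = ℓ(v)`. -/
def rWeak {B W : Type*} [Group W] {M : CoxeterMatrix B} (cs : CoxeterSystem M W)
    (u v : W) : Prop :=
  cs.length u + cs.length (u⁻¹ * v) = cs.length v

/-- The strong Bruhat order: `u ≤ v` iff some reduced word for `v` has a subword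
which is a word for `u`. -/
def bruhat {B W : Type*} [Group W] {M : CoxeterMatrix B} (cs : CoxeterSystem M W)
    (u v : W) : Prop :=
  ∃ ω : List B, cs.IsReduced ω ∧ cs.wordProd ω = v ∧
    ∃ ω' : List B, ω'.Sublist ω ∧ cs.wordProd ω' = u

lemma ZMod.eq_zero_of_ne_one {a : ZMod 2} (h : a ≠ 1) : a = 0 := by
  revert a; decide

/-- The semidirect product `(W → ZMod 2) ⋊ W`, where `W` acts on functions by conjugating their
argument. -/
@[ext]
structure ParitySemidirect (W : Type*) where
  parity : W → ZMod 2
  elem : W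

namespace ParitySemidirect

variable {W : Type*} [Group W]

instance : One (ParitySemidirect W) := ⟨⟨0, 1⟩⟩

instance : Mul (ParitySemidirect W) :=
  ⟨fun a b => ⟨fun t => a.parity t + b.parity (a.elem⁻¹ * t * a.elem), a.elem * b.elem⟩⟩

@[simp] lemma one_parity : (1 : ParitySemidirect W).parity = 0 := rfl
@[simp] lemma one_elem : (1 : ParitySemidirect W).elem = 1 := rfl
@[simp] lemma mul_parity (a b : ParitySemidirect W) (t : W) :
    (a * b).parity t = a.parity t + b.parity (a.elem⁻¹ * t * a.elem) := rfl
@[simp] lemma mul_elem (a b : ParitySemidirect W) : (a * b).elem = a.elem * b.elem := rfl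

instance : Monoid (ParitySemidirect W) where
  mul_assoc a b c := by ext <;> simp [mul_assoc, add_assoc]
  one_mul a := by ext <;> simp
  mul_one a := by ext <;> simp

end ParitySemidirect

namespace CoxeterSystem

variable {B W : Type*} [Group W] {M : CoxeterMatrix B} (cs : CoxeterSystem M W)

local prefix:100 "s " => cs.simple
local prefix:100 "π " => cs.wordProd
local prefix:100 "ℓ " => cs.length
local prefix:100 "lis " => cs.leftInvSeq

lemma prod_map_alternatingWord {B G : Type*} [Monoid G] (f : B → G) (i i' : B) (m : ℕ) :
    ((alternatingWord i i' (2 * m)).map f).prod = (f i * f i') ^ m := by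
  induction m with
  | zero => simp [alternatingWord]
  | succ m ih =>
    rw [show 2 * (m + 1) = 2 * m + 1 + 1 by ring, alternatingWord_succ,
      alternatingWord_succ]
    simp [ih, pow_succ]

open Classical in
noncomputable def parityGen (i : B) : ParitySemidirect W := ⟨Pi.single (s i) 1, s i⟩

lemma parity_prod_map_parityGen [DecidableEq W] (ω : List B) (t : W) :
    (ω.map cs.parityGen).prod.parity t = (lis ω).count t := by
  induction ω generalizing t with
  | nil => simp
  | cons i ω ih =>
    have hconj : t = MulAut.conj (s i) ((s i)⁻¹ * t * s i) := by simp [mul_assoc]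
    rw [List.map_cons, List.prod_cons, ParitySemidirect.mul_parity, ih, leftInvSeq,
      List.count_cons, hconj, List.count_map_of_injective _ _ (MulAut.conj (s i)).injective,
      ← hconj]
    simp [parityGen, Pi.single_apply, add_comm, @eq_comm _ t (s i)]

lemma elem_prod_map_parityGen (ω : List B) : (ω.map cs.parityGen).prod.elem = π ω := by
  induction ω with
  | nil => simp
  | cons i ω ih => simp [ih, wordProd_cons, parityGen]

lemma leftInvSeq_alternatingWord (i i' : B) (m : ℕ) :
    lis (alternatingWord i i' (2 * m)) =
      (List.range (2 * m)).map fun k => π alternatingWord i' i (2 * k + 1) := by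
  apply List.ext_getElem (by simp)
  intro k hk _
  rw [getElem_leftInvSeq_alternatingWord _ _ _ _ _ (by simpa using hk)]
  simp

lemma parityGen_liftable : M.IsLiftable cs.parityGen := by
  classical
  -- The left inversion sequence of the alternating word of length `2 m` is `m`-periodic, so each
  -- reflection occurs in it an even number of times.
  intro i i'
  set m := M i i'
  have hm : (s i' * s i) ^ m = 1 := by
    rw [show m = M i' i from M.symmetric i i']
    exact cs.simple_mul_simple_pow i' i
  have hper : ∀ k,
      π alternatingWord i' i (2 * (m + k) + 1) = π alternatingWord i' i (2 * k + 1) := by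
    intro k
    simp [prod_alternatingWord_eq_mul_pow, show ∀ n, (2 * n + 1) / 2 = n by omega, pow_add, hm]
  rw [← prod_map_alternatingWord]
  ext t
  · rw [parity_prod_map_parityGen, leftInvSeq_alternatingWord, two_mul, List.range_add,
      List.map_append, List.map_map]
    simp only [Function.comp_def, hper, List.count_append, Nat.cast_add,
      CharTwo.add_self_eq_zero, ParitySemidirect.one_parity, Pi.zero_apply]
  · rw [elem_prod_map_parityGen, prod_alternatingWord_eq_mul_pow]
    simp [m, cs.simple_mul_simple_pow]

noncomputable def parityLift : W →* ParitySemidirect W :=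
  cs.lift ⟨cs.parityGen, cs.parityGen_liftable⟩

lemma parityLift_wordProd (ω : List B) : cs.parityLift (π ω) = (ω.map cs.parityGen).prod := by
  rw [wordProd, map_list_prod, List.map_map]
  congr 2
  ext1 i
  exact cs.lift_apply_simple cs.parityGen_liftable i

lemma elem_parityLift (w : W) : (cs.parityLift w).elem = w := by
  obtain ⟨ω, rfl⟩ := cs.wordProd_surjective w
  rw [parityLift_wordProd, elem_prod_map_parityGen]

noncomputable def inversionParity (w t : W) : ZMod 2 := (cs.parityLift w).parity t

lemma inversionParity_mul (a b t : W) :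
    cs.inversionParity (a * b) t = cs.inversionParity a t + cs.inversionParity b (a⁻¹ * t * a) := by
  simp [inversionParity, elem_parityLift]

lemma inversionParity_wordProd [DecidableEq W] (ω : List B) (t : W) :
    cs.inversionParity (π ω) t = (lis ω).count t := by
  rw [inversionParity, parityLift_wordProd, parity_prod_map_parityGen]

lemma inversionParity_simple_eq_one_iff (i : B) (t : W) :
    cs.inversionParity (s i) t = 1 ↔ t = s i := by
  classical
  rw [← wordProd_singleton, inversionParity_wordProd]
  by_cases h : t = s i <;> simp [h, @eq_comm _ (s i)]

lemma inversionParity_one (t : W) : cs.inversionParity 1 t = 0 := by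
  simp [inversionParity]

lemma inversionParity_self {t : W} (ht : cs.IsReflection t) : cs.inversionParity t t = 1 := by
  obtain ⟨v, i, ht⟩ := ht
  have hs : v⁻¹ * t * v = s i := by rw [ht]; group
  have hv := cs.inversionParity_mul v v⁻¹ t
  rw [mul_inv_cancel, inversionParity_one, hs] at hv
  have hsi := (cs.inversionParity_simple_eq_one_iff i (s i)).2 rfl
  have e : cs.inversionParity t t = cs.inversionParity (v * (s i * v⁻¹)) t := by
    rw [← mul_assoc, ← ht]
  rw [e, inversionParity_mul, hs, inversionParity_mul, hsi, cs.inv_simple,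
    cs.simple_mul_simple_cancel_right, add_left_comm, ← hv, add_zero]

lemma mem_leftInvSeq_of_inversionParity_eq_one {ω : List B} {t : W}
    (h : cs.inversionParity (π ω) t = 1) : t ∈ lis ω := by
  classical
  rw [inversionParity_wordProd] at h
  by_contra hmem
  simp [List.count_eq_zero_of_not_mem hmem] at h

lemma isLeftInversion_iff_inversionParity_eq_one {w t : W} (ht : cs.IsReflection t) :
    cs.IsLeftInversion w t ↔ cs.inversionParity w t = 1 := by
  have hpar : ∀ u, cs.inversionParity u t = 1 → cs.IsLeftInversion u t := by
    intro u hu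
    obtain ⟨ω, hω, rfl⟩ := cs.exists_isReduced u
    exact cs.isLeftInversion_of_mem_leftInvSeq hω (cs.mem_leftInvSeq_of_inversionParity_eq_one hu)
  refine ⟨fun hw => ?_, hpar w⟩
  have htw : cs.inversionParity (t * w) t = 1 + cs.inversionParity w t := by
    rw [inversionParity_mul, cs.inversionParity_self ht, ht.inv,
      show t * t * t = t by simp [ht.mul_self]]
  by_contra hne
  have h0 := ZMod.eq_zero_of_ne_one hne
  have := (hpar (t * w) (by rw [htw, h0, add_zero])).2
  rw [← mul_assoc, ht.mul_self, one_mul] at this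
  exact absurd hw.2 (by omega)

theorem mem_leftInvSeq_of_isLeftInversion {ω : List B} {t : W}
    (h : cs.IsLeftInversion (π ω) t) : t ∈ lis ω :=
  cs.mem_leftInvSeq_of_inversionParity_eq_one
    ((cs.isLeftInversion_iff_inversionParity_eq_one h.1).1 h)

theorem exists_eraseIdx_of_isLeftInversion {ω : List B} {t : W}
    (h : cs.IsLeftInversion (π ω) t) : ∃ j, t * π ω = π (ω.eraseIdx j) := by
  obtain ⟨j, hj, rfl⟩ := List.mem_iff_getElem.mp (cs.mem_leftInvSeq_of_isLeftInversion h)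
  exact ⟨j, by rw [← List.getD_eq_getElem _ 1, getD_leftInvSeq_mul_wordProd]⟩

lemma eq_of_isLeftInversion_mul_simple {w t : W} {i : B} (h : cs.IsLeftInversion (w * s i) t)
    (h' : ¬cs.IsLeftInversion w t) : t = w * s i * w⁻¹ := by
  have ht := h.1
  rw [cs.isLeftInversion_iff_inversionParity_eq_one ht, inversionParity_mul] at h
  rw [cs.isLeftInversion_iff_inversionParity_eq_one ht] at h'
  have h0 := ZMod.eq_zero_of_ne_one h'
  rw [h0, zero_add, inversionParity_simple_eq_one_iff] at h
  rw [← h]; group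

theorem ncard_setOf_isLeftInversion (w : W) : {t | cs.IsLeftInversion w t}.ncard = ℓ w := by
  classical
  obtain ⟨ω, hω, rfl⟩ := cs.exists_isReduced w
  have hset : {t | cs.IsLeftInversion (π ω) t} = ↑(lis ω).toFinset := by
    ext t
    simpa using ⟨cs.mem_leftInvSeq_of_isLeftInversion, cs.isLeftInversion_of_mem_leftInvSeq hω⟩
  rw [hset, Set.ncard_coe_finset, List.toFinset_card_of_nodup hω.nodup_leftInvSeq,
    length_leftInvSeq, hω]

theorem length_add_length_of_mul_eq_longest [Finite W] {w₀ : W} (hlong : ∀ u, ℓ u ≤ ℓ w₀)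
    {x y : W} (hxy : x * y = w₀) : ℓ x + ℓ y = ℓ w₀ := by
  -- Every reflection is a left inversion of `w₀`, and the cocycle identity makes the inversions
  -- of `x` and the `x`-conjugates of those of `y` disjoint.
  have hw₀ : ∀ {t}, cs.IsReflection t → cs.inversionParity w₀ t = 1 := fun ht =>
    (cs.isLeftInversion_iff_inversionParity_eq_one ht).1
      ⟨ht, lt_of_le_of_ne (hlong _) (ht.length_mul_right_ne w₀)⟩
  set Nx := {t | cs.IsLeftInversion x t}
  set Ny := (fun r => x * r * x⁻¹) '' {r | cs.IsLeftInversion y r}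
  have hdisj : Disjoint Nx Ny := by
    rw [Set.disjoint_left]
    rintro _ htx ⟨r, hr, rfl⟩
    have := hw₀ htx.1
    rw [← hxy, inversionParity_mul, (cs.isLeftInversion_iff_inversionParity_eq_one htx.1).1 htx,
      show x⁻¹ * (x * r * x⁻¹) * x = r by group,
      (cs.isLeftInversion_iff_inversionParity_eq_one hr.1).1 hr] at this
    exact absurd this (by decide)
  have hsub : Nx ∪ Ny ⊆ {t | cs.IsLeftInversion w₀ t} := by
    rintro _ (ht | ⟨r, hr, rfl⟩)
    · exact (cs.isLeftInversion_iff_inversionParity_eq_one ht.1).2 (hw₀ ht.1)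
    · exact (cs.isLeftInversion_iff_inversionParity_eq_one (hr.1.conj x)).2 (hw₀ (hr.1.conj x))
  have hNy : Ny.ncard = ℓ y := by
    rw [Set.ncard_image_of_injective _ fun a b hab => by simpa using hab,
      ncard_setOf_isLeftInversion]
  have := Set.ncard_le_ncard hsub
  rw [Set.ncard_union_eq hdisj, ncard_setOf_isLeftInversion, hNy,
    ncard_setOf_isLeftInversion] at this
  have := cs.length_mul_le x y
  rw [hxy] at this
  omega

def BruhatStep (x y : W) : Prop := ∃ t, cs.IsReflection t ∧ y = t * x ∧ ℓ x < ℓ y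

def BruhatLE : W → W → Prop := Relation.ReflTransGen cs.BruhatStep

lemma bruhatLE_mul_simple {x : W} {i : B} (h : ℓ x < ℓ (x * s i)) : cs.BruhatLE x (x * s i) :=
  .single ⟨x * s i * x⁻¹, (cs.isReflection_simple i).conj x, by group, h⟩

lemma exists_sublist_of_bruhatLE {x y : W} (h : cs.BruhatLE x y) {ω : List B} (hω : π ω = y) :
    ∃ σ, σ.Sublist ω ∧ π σ = x := by
  induction h generalizing ω with
  | refl => exact ⟨ω, .refl ω, hω⟩
  | tail _ hstep ih =>
    obtain ⟨t, ht, rfl, hlt⟩ := hstep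
    obtain ⟨j, hj⟩ := cs.exists_eraseIdx_of_isLeftInversion (ω := ω)
      ⟨ht, by rwa [hω, ← mul_assoc, ht.mul_self, one_mul]⟩
    obtain ⟨σ, hσ, rfl⟩ := ih (ω := ω.eraseIdx j)
      (by rw [← hj, hω, ← mul_assoc, ht.mul_self, one_mul])
    exact ⟨σ, hσ.trans (ω.eraseIdx_sublist j), rfl⟩

variable {cs} in
lemma BruhatStep.mul_simple {x y : W} (h : cs.BruhatStep x y) (i : B) :
    x * s i = y ∨ cs.BruhatStep (x * s i) (y * s i) := by
  obtain ⟨t, ht, rfl, hlt⟩ := h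
  by_cases hs : ℓ (x * s i) < ℓ (t * x * s i)
  · exact .inr ⟨t, ht, mul_assoc _ _ _, hs⟩
  · left
    set w := t * x * s i with hw
    have key : t = w * s i * w⁻¹ := cs.eq_of_isLeftInversion_mul_simple
      ⟨ht, by simpa [hw, ← mul_assoc, ht.mul_self] using hlt⟩
      fun h => hs (by simpa [hw, ← mul_assoc, ht.mul_self] using h.2)
    calc x * s i = t * w := by rw [hw, ← mul_assoc, ← mul_assoc, ht.mul_self, one_mul]
      _ = w * s i := by rw [key]; group
      _ = t * x := cs.simple_mul_simple_cancel_right i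

variable {cs} in
lemma BruhatLE.mul_simple_or {x y : W} (h : cs.BruhatLE x y) (i : B) :
    cs.BruhatLE (x * s i) y ∨ cs.BruhatLE (x * s i) (y * s i) := by
  induction h using Relation.ReflTransGen.head_induction_on with
  | refl => exact .inr .refl
  | head hstep hrest ih =>
    rcases hstep.mul_simple i with h | h
    · exact .inl (h ▸ hrest)
    · exact ih.imp (Relation.ReflTransGen.head h) (Relation.ReflTransGen.head h)

lemma bruhatLE_wordProd_of_sublist {ω σ : List B} (hω : cs.IsReduced ω) (h : σ.Sublist ω) :
    cs.BruhatLE (π σ) (π ω) := by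
  induction ω using List.reverseRecOn generalizing σ with
  | nil => rw [List.sublist_nil.mp h]; exact .refl
  | append_singleton ω i ih =>
    have hω' : cs.IsReduced ω := by simpa using hω.take ω.length
    have hasc : ℓ (π ω) < ℓ (π ω * s i) := by
      have := hω.eq
      rw [wordProd_append, wordProd_singleton] at this
      rw [this, hω'.eq]; simp
    rw [wordProd_append, wordProd_singleton]
    obtain ⟨σ, τ, rfl, hσ, hτ⟩ := List.sublist_append_iff.mp h
    rcases List.sublist_singleton.mp hτ with rfl | rfl
    · rw [List.append_nil]
      exact (ih hω' hσ).trans (cs.bruhatLE_mul_simple hasc)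
    · rw [wordProd_append, wordProd_singleton]
      exact ((ih hω' hσ).mul_simple_or i).elim (·.trans (cs.bruhatLE_mul_simple hasc)) id

theorem bruhat_iff_bruhatLE {x y : W} : bruhat cs x y ↔ cs.BruhatLE x y := by
  constructor
  · rintro ⟨ω, hω, rfl, σ, hσ, rfl⟩
    exact cs.bruhatLE_wordProd_of_sublist hω hσ
  · intro h
    obtain ⟨ω, hω, rfl⟩ := cs.exists_isReduced y
    exact ⟨ω, hω, rfl, cs.exists_sublist_of_bruhatLE h rfl⟩

variable {cs} in
theorem BruhatLE.lifting {x y : W} {i : B} (h : cs.BruhatLE x y) (hy : ℓ (y * s i) < ℓ y) :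
    cs.BruhatLE (x * s i) y ∧ (cs.BruhatLE x (y * s i) ∨ cs.BruhatLE (x * s i) (y * s i)) := by
  obtain ⟨ω, hω, hωy⟩ := cs.exists_isReduced (y * s i)
  have hyω : π (ω ++ [i]) = y := by rw [wordProd_append, wordProd_singleton, ← hωy,
    cs.simple_mul_simple_cancel_right]
  have hωi : cs.IsReduced (ω ++ [i]) := by
    rw [IsReduced, hyω, List.length_append, ← hω.eq, ← hωy, List.length_singleton]
    have := cs.length_mul_simple y i
    omega
  have hys : cs.BruhatLE (y * s i) y := by
    simpa using cs.bruhatLE_mul_simple (x := y * s i) (i := i) (by simpa using hy)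
  obtain ⟨_, hσ', rfl⟩ := cs.exists_sublist_of_bruhatLE h hyω
  obtain ⟨σ, τ, rfl, hσ, hτ⟩ := List.sublist_append_iff.mp hσ'
  rcases List.sublist_singleton.mp hτ with rfl | rfl
  · have hxy := cs.bruhatLE_wordProd_of_sublist hωi (hσ.append_right [i])
    rw [wordProd_append, wordProd_singleton, hyω] at hxy
    rw [List.append_nil]
    exact ⟨hxy, .inl (hωy ▸ cs.bruhatLE_wordProd_of_sublist hω hσ)⟩
  · have hσy : cs.BruhatLE (π σ) (y * s i) := hωy ▸ cs.bruhatLE_wordProd_of_sublist hω hσ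
    rw [wordProd_append, wordProd_singleton, cs.simple_mul_simple_cancel_right]
    exact ⟨hσy.trans hys, .inr hσy⟩

lemma mul_simple_inv_mul (x v : W) (i : B) : (x * s i)⁻¹ * v = s i * (x⁻¹ * v) := by
  simp [mul_assoc]

lemma rWeak_mul_simple {u v : W} {i : B} (h : rWeak cs u v)
    (hi : ℓ (s i * (u⁻¹ * v)) < ℓ (u⁻¹ * v)) :
    rWeak cs (u * s i) v ∧ ℓ (u * s i) = ℓ u + 1 := by
  have h1 := cs.length_mul_le (u * s i) ((u * s i)⁻¹ * v)
  rw [mul_inv_cancel_left, mul_simple_inv_mul] at h1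
  have := cs.length_mul_simple u i
  have := cs.length_simple_mul (u⁻¹ * v) i
  unfold rWeak at h ⊢
  rw [mul_simple_inv_mul]
  omega

lemma rWeak_mul_simple_of_lt {x v : W} {i : B} (h : rWeak cs x v) (hi : ℓ (x * s i) < ℓ x) :
    rWeak cs (x * s i) v := by
  have h1 := cs.length_mul_le (x * s i) ((x * s i)⁻¹ * v)
  rw [mul_inv_cancel_left, mul_simple_inv_mul] at h1
  have := cs.length_mul_simple x i
  have := cs.length_simple_mul (x⁻¹ * v) i
  unfold rWeak at h ⊢
  rw [mul_simple_inv_mul]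
  omega

/-- `u` is the element `v_w` of the statement. -/
def IsLongestBelow (v w u : W) : Prop :=
  rWeak cs u v ∧ cs.BruhatLE u w ∧ ∀ x, rWeak cs x v → cs.BruhatLE x w → ℓ x ≤ ℓ u

variable {cs} in
lemma IsLongestBelow.mul_simple {v w u : W} {i : B} (hu : cs.IsLongestBelow v w u)
    (hi : ℓ (s i * (u⁻¹ * v)) < ℓ (u⁻¹ * v)) :
    ℓ (w * s i) = ℓ w + 1 ∧ cs.IsLongestBelow v (w * s i) (u * s i) := by
  obtain ⟨huv, huw, hmax⟩ := hu
  obtain ⟨husv, hus⟩ := cs.rWeak_mul_simple huv hi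
  have hnot : ¬cs.BruhatLE (u * s i) w := fun h => by have := hmax _ husv h; omega
  have hw : ℓ (w * s i) = ℓ w + 1 :=
    (cs.length_mul_simple w i).resolve_right fun h => hnot (huw.lifting (by omega)).1
  have hlift : ∀ {x}, cs.BruhatLE x (w * s i) →
      cs.BruhatLE (x * s i) (w * s i) ∧ (cs.BruhatLE x w ∨ cs.BruhatLE (x * s i) w) := by
    intro x hx
    simpa using hx.lifting (i := i) (by rw [cs.simple_mul_simple_cancel_right]; omega)
  refine ⟨hw, husv, (hlift (huw.trans (cs.bruhatLE_mul_simple (by omega)))).1, ?_⟩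
  intro x hxv hxw
  rcases (hlift hxw).2 with h | h
  · have := hmax x hxv h; omega
  · rcases cs.length_mul_simple x i with hx | hx
    · have := hmax x hxv ((cs.bruhatLE_mul_simple (by omega)).trans h); omega
    · have := hmax _ (cs.rWeak_mul_simple_of_lt hxv (by omega)) h; omega

variable {cs} in
theorem IsLongestBelow.length_mul {v w u : W} (hu : cs.IsLongestBelow v w u) :
    ℓ (w * (u⁻¹ * v)) = ℓ w + ℓ (u⁻¹ * v) := by
  obtain ⟨n, hn⟩ : ∃ n, ℓ (u⁻¹ * v) = n := ⟨_, rfl⟩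
  induction n generalizing u w with
  | zero => rw [hn, cs.length_eq_zero_iff.mp hn, mul_one, add_zero]
  | succ n ih =>
    obtain ⟨i, hi⟩ := cs.exists_leftDescent_of_ne_one (w := u⁻¹ * v)
      fun h => by rw [h, cs.length_one] at hn; omega
    have hi' := cs.isLeftDescent_iff.mp hi
    obtain ⟨hw, hus⟩ := hu.mul_simple hi
    have := ih hus (by rw [mul_simple_inv_mul]; omega)
    rw [mul_simple_inv_mul,
      show w * s i * (s i * (u⁻¹ * v)) = w * (u⁻¹ * v) by simp [mul_assoc]] at this
    omega

end CoxeterSystem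

/-- Fix `w`. For `v`, letting `v_w` be the unique maximal-length element of
`{x : x ≤_R v, x ≤ w}`, one has `v_w⁻¹ v ≤_R w⁻¹ w₀`. -/
theorem stmt8 {B W : Type*} [Group W] {M : CoxeterMatrix B} (cs : CoxeterSystem M W)
    [Finite W] (w₀ : W) (hlong : ∀ u : W, cs.length u ≤ cs.length w₀)
    (w v vw : W)
    (hmem : rWeak cs vw v ∧ bruhat cs vw w)
    (hmax : ∀ x : W, rWeak cs x v → bruhat cs x w → cs.length x ≤ cs.length vw) :
    rWeak cs (vw⁻¹ * v) (w⁻¹ * w₀) := by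
  have hvw : cs.IsLongestBelow v w vw := ⟨hmem.1, cs.bruhat_iff_bruhatLE.1 hmem.2,
    fun x hxv hxw => hmax x hxv (cs.bruhat_iff_bruhatLE.2 hxw)⟩
  have hadd := hvw.length_mul
  have hw := cs.length_add_length_of_mul_eq_longest hlong (x := w) (y := w⁻¹ * w₀) (by group)
  have hwz := cs.length_add_length_of_mul_eq_longest hlong
    (x := w * (vw⁻¹ * v)) (y := (vw⁻¹ * v)⁻¹ * (w⁻¹ * w₀)) (by group)
  unfold rWeak
  omega
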